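/- Let p = k−1 ≥ 1 and let b(x) = Σ b_n x^n satisfy b(x) = exp(Σ_{i≥1} x^i b(x^i)^p / i). Then for every n, b_n is bounded above by the n-th coefficient c_n of the series c(x) defined by c = 1 + x c^{p+1}; consequently the radius of convergence ξ_p of b(x) satisfies ξ_p ≥ p^p/(p+1)^{p+1}. -/

import Mathlib

namespace KGonal2Trees

/-- Composition of a power series `F` with `x^d`, i.e. the series `F(x^d)`. -/
noncomputable def compXPowR (d : ℕ) (F : PowerSeries ℝ) : PowerSeries ℝ :=
  PowerSeries.mk fun n => if d ∣ n then PowerSeries.coeff (R := ℝ) (n / d) F else 0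

/-- Exponential `exp(S)` of a power series `S` with zero constant term. -/
noncomputable def expSR (S : PowerSeries ℝ) : PowerSeries ℝ :=
  PowerSeries.mk fun n =>
    ∑ m ∈ Finset.range (n + 1), PowerSeries.coeff (R := ℝ) n (S ^ m) / (m.factorial : ℝ)

/-- The series `Σ_{i ≥ 1} x^i B(x^i)^(k-1) / i`. -/
noncomputable def seqBR (k : ℕ) (B : PowerSeries ℝ) : PowerSeries ℝ :=
  PowerSeries.mk fun n =>
    ∑ i ∈ Finset.Icc 1 n,
      PowerSeries.coeff (R := ℝ) n (PowerSeries.X ^ i * compXPowR i B ^ (k - 1)) / (i : ℝ)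

/-!
With `y = X * C ^ p` the Fuss–Catalan equation reads `C = 1 / (1 - y) = exp (∑ yⁱ / i)`, while
`B = exp (∑ Xⁱ B(Xⁱ) ^ p / i)`. Since `yⁱ = Xⁱ (C ^ i) ^ p` and, all `c_n` being at least `1`,
`C(Xⁱ) ≤ C ^ i` coefficientwise, the coefficients of `C` majorize those of `B`, by induction on the
degree: the exponent of `B` in degree `n` only involves `b_m` with `m < n`. For `0 ≤ z ≤ ρ`,
with `ρ = p ^ p / (p + 1) ^ (p + 1)`, the partial sums of `∑ c_n zⁿ` stay below `w = (p + 1) / p`,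
because `1 + z w ^ (p + 1) ≤ w`.
-/

open PowerSeries Finset

lemma coeff_pow_eq_zero_of_lt {R : Type*} [CommSemiring R] {S : R⟦X⟧} (hS : constantCoeff S = 0)
    {n d : ℕ} (h : n < d) : coeff n (S ^ d) = 0 := by
  obtain ⟨T, rfl⟩ := X_dvd_iff.mpr hS
  rw [mul_pow, coeff_X_pow_mul', if_neg (by omega)]

lemma coeff_subst_eq_sum_range {R : Type*} [CommRing R] (f : R⟦X⟧) {S : R⟦X⟧}
    (hS : constantCoeff S = 0) (n : ℕ) :
    coeff n (f.subst S) = ∑ d ∈ range (n + 1), coeff d f * coeff n (S ^ d) := by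
  rw [coeff_subst' (HasSubst.of_constantCoeff_zero' hS)]
  refine finsum_eq_sum_of_support_subset _ fun d hd => ?_
  rw [coe_range, Set.mem_Iio, Nat.lt_succ_iff]
  by_contra! h
  exact hd (by simp only [coeff_pow_eq_zero_of_lt hS h, smul_zero])

lemma expSR_eq_subst_exp {S : ℝ⟦X⟧} (hS : constantCoeff S = 0) : expSR S = (exp ℝ).subst S := by
  ext n
  rw [expSR, coeff_mk, coeff_subst_eq_sum_range _ hS]
  refine sum_congr rfl fun d _ => ?_
  rw [coeff_exp]
  simp [div_eq_inv_mul]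

/-- `-log (1 - X) = ∑_{n ≥ 1} Xⁿ / n`; the constant coefficient is `(0 : ℝ)⁻¹ = 0`. -/
noncomputable def negLogOneSub : ℝ⟦X⟧ := mk fun n => (n : ℝ)⁻¹

lemma constantCoeff_negLogOneSub : constantCoeff negLogOneSub = 0 := by
  simp [negLogOneSub, ← coeff_zero_eq_constantCoeff_apply]

lemma one_sub_X_mul_derivative_negLogOneSub : (1 - X) * d⁄dX ℝ negLogOneSub = 1 := by
  have : d⁄dX ℝ negLogOneSub = PowerSeries.mk 1 := by
    ext n
    rw [coeff_derivative, negLogOneSub, coeff_mk, coeff_mk]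
    push_cast
    field_simp
    simp
  rw [this, mul_comm, mk_one_mul_one_sub_eq_one]

lemma one_sub_X_mul_exp_subst_negLogOneSub : (1 - X) * (exp ℝ).subst negLogOneSub = 1 := by
  have hL := HasSubst.of_constantCoeff_zero' constantCoeff_negLogOneSub
  refine derivative.ext ?_ ?_
  · rw [Derivation.leibniz, derivative_subst hL, derivative_exp, map_sub, derivative_X,
      derivative_one, smul_eq_mul, smul_eq_mul]
    linear_combination ((exp ℝ).subst negLogOneSub) * one_sub_X_mul_derivative_negLogOneSub
  · have := coeff_subst_eq_sum_range (exp ℝ) constantCoeff_negLogOneSub 0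
    simp only [zero_add, range_one, sum_singleton, pow_zero,
      coeff_zero_eq_constantCoeff_apply] at this
    simp [this]

lemma constantCoeff_negLogOneSub_subst {y : ℝ⟦X⟧} (hy : constantCoeff y = 0) :
    constantCoeff (negLogOneSub.subst y) = 0 := by
  rw [← coeff_zero_eq_constantCoeff_apply, coeff_subst_eq_sum_range _ hy]
  simp [negLogOneSub]

lemma one_sub_mul_expSR_negLogOneSub_subst {y : ℝ⟦X⟧} (hy : constantCoeff y = 0) :
    (1 - y) * expSR (negLogOneSub.subst y) = 1 := by
  have hL := HasSubst.of_constantCoeff_zero' constantCoeff_negLogOneSub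
  have hy' := HasSubst.of_constantCoeff_zero' hy
  have h := congrArg (substAlgHom (R := ℝ) hy') one_sub_X_mul_exp_subst_negLogOneSub
  rw [map_mul, map_sub, map_one, coe_substAlgHom, subst_X hy',
    subst_comp_subst_apply hL hy'] at h
  rwa [expSR_eq_subst_exp (constantCoeff_negLogOneSub_subst hy)]

section Majorization

variable {R : Type*} [CommSemiring R] [PartialOrder R]

def MajorizedBelow (n : ℕ) (f g : R⟦X⟧) : Prop :=
  ∀ j < n, 0 ≤ coeff j f ∧ coeff j f ≤ coeff j g

namespace MajorizedBelow

variable {n : ℕ} {f g f' g' : R⟦X⟧}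

lemma of_coeff_nonneg (hf : ∀ j, 0 ≤ coeff j f) : MajorizedBelow n f f :=
  fun j _ => ⟨hf j, le_rfl⟩

lemma mono {m : ℕ} (h : MajorizedBelow n f g) (hmn : m ≤ n) : MajorizedBelow m f g :=
  fun j hj => h j (hj.trans_le hmn)

lemma one [IsOrderedRing R] : MajorizedBelow n (1 : R⟦X⟧) 1 := by
  intro j _
  rw [coeff_one]
  split_ifs <;> simp

lemma mul [IsOrderedRing R] (hf : MajorizedBelow n f g) (hf' : MajorizedBelow n f' g') :
    MajorizedBelow n (f * f') (g * g') := by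
  intro j hj
  rw [coeff_mul, coeff_mul]
  have hlt : ∀ ab ∈ antidiagonal j, ab.1 < n ∧ ab.2 < n := fun ab hab => by
    rw [HasAntidiagonal.mem_antidiagonal] at hab
    omega
  constructor
  · exact sum_nonneg fun ab hab =>
      mul_nonneg (hf _ (hlt ab hab).1).1 (hf' _ (hlt ab hab).2).1
  · refine sum_le_sum fun ab hab => ?_
    obtain ⟨h₁, h₂⟩ := hlt ab hab
    exact mul_le_mul (hf _ h₁).2 (hf' _ h₂).2 (hf' _ h₂).1 ((hf _ h₁).1.trans (hf _ h₁).2)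

lemma pow [IsOrderedRing R] (h : MajorizedBelow n f g) (q : ℕ) :
    MajorizedBelow n (f ^ q) (g ^ q) := by
  induction q with
  | zero => simpa using one
  | succ q ih => simpa [pow_succ] using ih.mul h

lemma X_pow_mul (h : MajorizedBelow n f g) (i : ℕ) :
    MajorizedBelow (n + i) (X ^ i * f) (X ^ i * g) := by
  intro j hj
  rw [coeff_X_pow_mul', coeff_X_pow_mul']
  split_ifs with hij
  · exact h _ (by omega)
  · simp

end MajorizedBelow

lemma coeff_mul_coeff_le_coeff_mul [IsOrderedRing R] {f g : R⟦X⟧} {a b : ℕ}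
    (hf : MajorizedBelow (a + b + 1) f f) (hg : MajorizedBelow (a + b + 1) g g) :
    coeff a f * coeff b g ≤ coeff (a + b) (f * g) := by
  rw [coeff_mul]
  refine single_le_sum (f := fun ab => coeff ab.1 f * coeff ab.2 g) (fun ab hab => ?_)
    (a := (a, b)) (HasAntidiagonal.mem_antidiagonal.mpr rfl)
  rw [HasAntidiagonal.mem_antidiagonal] at hab
  exact mul_nonneg (hf _ (by omega)).1 (hg _ (by omega)).1

lemma coeff_pow_nonneg [IsOrderedRing R] {f : R⟦X⟧} (hf : ∀ n, 0 ≤ coeff n f) (q n : ℕ) :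
    0 ≤ coeff n (f ^ q) :=
  ((MajorizedBelow.of_coeff_nonneg hf).pow q n n.lt_succ_self).1

end Majorization

lemma MajorizedBelow.expSR {n : ℕ} {S T : ℝ⟦X⟧} (h : MajorizedBelow n S T) :
    MajorizedBelow n (expSR S) (expSR T) := by
  intro j hj
  simp only [KGonal2Trees.expSR, coeff_mk]
  exact ⟨sum_nonneg fun m _ => div_nonneg ((h.pow m) j hj).1 (by positivity),
    sum_le_sum fun m _ => div_le_div_of_nonneg_right ((h.pow m) j hj).2 (by positivity)⟩

section FussCatalan

variable {p : ℕ} {C : ℝ⟦X⟧}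

lemma constantCoeff_eq_one_of_eq_one_add_X_mul_pow (hC : C = 1 + X * C ^ (p + 1)) :
    constantCoeff C = 1 := by
  rw [hC]
  simp

lemma coeff_succ_of_eq_one_add_X_mul_pow (hC : C = 1 + X * C ^ (p + 1)) (m : ℕ) :
    coeff (m + 1) C = coeff m (C ^ (p + 1)) := by
  conv_lhs => rw [hC]
  rw [map_add, coeff_one, if_neg m.succ_ne_zero, zero_add, coeff_succ_X_mul]

lemma one_le_coeff_of_eq_one_add_X_mul_pow (hC : C = 1 + X * C ^ (p + 1)) (m : ℕ) :
    1 ≤ coeff m C := by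
  induction m using Nat.strong_induction_on with
  | _ m ih =>
  cases m with
  | zero =>
    rw [coeff_zero_eq_constantCoeff_apply, constantCoeff_eq_one_of_eq_one_add_X_mul_pow hC]
  | succ m =>
    have hC' : MajorizedBelow (0 + m + 1) C C := fun j hj =>
      ⟨zero_le_one.trans (ih j (by omega)), le_rfl⟩
    calc 1 ≤ coeff 0 (C ^ p) * coeff m C := by
          rw [coeff_zero_eq_constantCoeff_apply, map_pow,
            constantCoeff_eq_one_of_eq_one_add_X_mul_pow hC, one_pow, one_mul]
          exact ih m (by omega)
      _ ≤ coeff (0 + m) (C ^ p * C) := coeff_mul_coeff_le_coeff_mul (hC'.pow p) hC'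
      _ = coeff (m + 1) C := by rw [zero_add, ← pow_succ, coeff_succ_of_eq_one_add_X_mul_pow hC]

lemma coeff_nonneg_of_eq_one_add_X_mul_pow (hC : C = 1 + X * C ^ (p + 1)) (m : ℕ) :
    0 ≤ coeff m C :=
  zero_le_one.trans (one_le_coeff_of_eq_one_add_X_mul_pow hC m)

end FussCatalan

lemma coeff_le_coeff_pow_mul {C : ℝ⟦X⟧} (hC : ∀ m, 1 ≤ coeff m C) {i : ℕ} (hi : 1 ≤ i) (q : ℕ) :
    coeff q C ≤ coeff (i * q) (C ^ i) := by
  have hCn : ∀ n, MajorizedBelow n C C :=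
    fun n => .of_coeff_nonneg fun m => zero_le_one.trans (hC m)
  induction i, hi using Nat.le_induction with
  | base => rw [one_mul, pow_one]
  | succ i hi ih =>
    calc coeff q C ≤ coeff q C * coeff (i * q) (C ^ i) :=
          le_mul_of_one_le_right ((hCn (q + 1) q q.lt_succ_self).1) ((hC q).trans ih)
      _ ≤ coeff (q + i * q) (C * C ^ i) := coeff_mul_coeff_le_coeff_mul (hCn _) ((hCn _).pow i)
      _ = coeff ((i + 1) * q) (C ^ (i + 1)) := by rw [← pow_succ', add_mul, one_mul, add_comm]

lemma MajorizedBelow.compXPowR {n i : ℕ} {B C : ℝ⟦X⟧} (hC : ∀ m, 1 ≤ coeff m C) (hi : 1 ≤ i)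
    (h : MajorizedBelow n B C) : MajorizedBelow n (compXPowR i B) (C ^ i) := by
  intro r hr
  rw [KGonal2Trees.compXPowR, coeff_mk]
  split_ifs with hdvd
  · obtain ⟨q, rfl⟩ := hdvd
    rw [Nat.mul_div_cancel_left q (by omega)]
    have hq : q < n := lt_of_le_of_lt (Nat.le_mul_of_pos_left q hi) hr
    exact ⟨(h q hq).1, (h q hq).2.trans (coeff_le_coeff_pow_mul hC hi q)⟩
  · exact ⟨le_rfl, coeff_pow_nonneg (fun m => zero_le_one.trans (hC m)) i r⟩

lemma MajorizedBelow.seqBR {n p : ℕ} {B C : ℝ⟦X⟧} (hC : ∀ m, 1 ≤ coeff m C)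
    (h : MajorizedBelow n B C) :
    MajorizedBelow (n + 1) (seqBR (p + 1) B) (negLogOneSub.subst (X * C ^ p)) := by
  intro j hj
  have hy : constantCoeff (X * C ^ p) = 0 := by simp
  have hzero : ∀ i ∈ range (j + 1), i ∉ Icc 1 j →
      coeff i negLogOneSub * coeff j ((X * C ^ p) ^ i) = 0 := fun i hi hi' => by
    obtain rfl : i = 0 := by simp only [mem_range, mem_Icc] at hi hi'; omega
    simp [negLogOneSub]
  rw [KGonal2Trees.seqBR, coeff_mk, coeff_subst_eq_sum_range _ hy,
    ← sum_subset (fun i hi => by simp only [mem_range, mem_Icc] at hi ⊢; omega) hzero]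
  have hterm : ∀ i ∈ Icc 1 j, 0 ≤ coeff j (X ^ i * KGonal2Trees.compXPowR i B ^ p) ∧
      coeff j (X ^ i * KGonal2Trees.compXPowR i B ^ p) ≤ coeff j ((X * C ^ p) ^ i) :=
      fun i hi => by
    rw [mem_Icc] at hi
    rw [mul_pow, ← pow_mul, mul_comm p i, pow_mul]
    have hmaj := (((h.mono (by omega : j + 1 - i ≤ n)).compXPowR hC hi.1).pow p).X_pow_mul i
    exact hmaj.mono (by omega : j + 1 ≤ j + 1 - i + i) j (by omega)
  simp only [Nat.add_sub_cancel, negLogOneSub, coeff_mk, div_eq_inv_mul]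
  exact ⟨sum_nonneg fun i hi => mul_nonneg (by positivity) (hterm i hi).1,
    sum_le_sum fun i hi => mul_le_mul_of_nonneg_left (hterm i hi).2 (by positivity)⟩

lemma expSR_negLogOneSub_subst_of_eq_one_add_X_mul_pow {p : ℕ} {C : ℝ⟦X⟧}
    (hC : C = 1 + X * C ^ (p + 1)) : expSR (negLogOneSub.subst (X * C ^ p)) = C := by
  have hy : constantCoeff (X * C ^ p) = 0 := by simp
  have hinv : C * (1 - X * C ^ p) = 1 := by linear_combination hC
  calc expSR (negLogOneSub.subst (X * C ^ p))
      = C * (1 - X * C ^ p) * expSR (negLogOneSub.subst (X * C ^ p)) := by rw [hinv, one_mul]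
    _ = C := by rw [mul_assoc, one_sub_mul_expSR_negLogOneSub_subst hy, mul_one]

lemma majorizedBelow_of_eq_expSR_seqBR {p : ℕ} {B C : ℝ⟦X⟧} (hB : B = expSR (seqBR (p + 1) B))
    (hC : C = 1 + X * C ^ (p + 1)) (n : ℕ) : MajorizedBelow n B C := by
  induction n with
  | zero => exact fun j hj => absurd hj j.not_lt_zero
  | succ n ih =>
    rw [hB, ← expSR_negLogOneSub_subst_of_eq_one_add_X_mul_pow hC]
    exact (ih.seqBR (one_le_coeff_of_eq_one_add_X_mul_pow hC)).expSR

lemma Polynomial.eval_le_eval_of_coeff_le {P Q : Polynomial ℝ} (h : ∀ n, P.coeff n ≤ Q.coeff n)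
    {z : ℝ} (hz : 0 ≤ z) : P.eval z ≤ Q.eval z := by
  rw [P.eval_eq_sum_range' (Nat.lt_succ_of_le (le_max_left _ Q.natDegree)),
    Q.eval_eq_sum_range' (Nat.lt_succ_of_le (le_max_right P.natDegree _))]
  exact sum_le_sum fun i _ => mul_le_mul_of_nonneg_right (h i) (pow_nonneg hz i)

lemma sum_range_coeff_mul_pow_eq_eval_trunc (f : ℝ⟦X⟧) (z : ℝ) (N : ℕ) :
    ∑ i ∈ range N, coeff i f * z ^ i = (trunc N f).eval z := by
  rw [← Polynomial.eval₂_id, eval₂_trunc_eq_sum_range]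
  rfl

lemma sum_range_coeff_mul_mul_pow_le {f g : ℝ⟦X⟧} (hf : ∀ n, 0 ≤ coeff n f)
    (hg : ∀ n, 0 ≤ coeff n g) {z : ℝ} (hz : 0 ≤ z) (N : ℕ) :
    ∑ i ∈ range N, coeff i (f * g) * z ^ i ≤
      (∑ i ∈ range N, coeff i f * z ^ i) * ∑ i ∈ range N, coeff i g * z ^ i := by
  simp only [sum_range_coeff_mul_pow_eq_eval_trunc, ← Polynomial.eval_mul]
  refine Polynomial.eval_le_eval_of_coeff_le (fun r => ?_) hz
  rw [coeff_trunc]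
  split_ifs with hr
  · rw [coeff_mul_eq_coeff_trunc_mul_trunc f g hr, ← Polynomial.coe_mul, Polynomial.coeff_coe]
  · rw [Polynomial.coeff_mul]
    refine sum_nonneg fun ab _ => mul_nonneg ?_ ?_ <;> rw [coeff_trunc] <;> split_ifs
    exacts [hf _, le_rfl, hg _, le_rfl]

lemma sum_range_coeff_pow_mul_pow_le {f : ℝ⟦X⟧} (hf : ∀ n, 0 ≤ coeff n f) {z : ℝ} (hz : 0 ≤ z)
    (N q : ℕ) :
    ∑ i ∈ range N, coeff i (f ^ q) * z ^ i ≤ (∑ i ∈ range N, coeff i f * z ^ i) ^ q := by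
  induction q with
  | zero =>
    simp only [pow_zero, coeff_one, ite_mul, one_mul, zero_mul, sum_ite_eq', mem_range]
    split_ifs <;> norm_num
  | succ q ih =>
    rw [pow_succ, pow_succ]
    exact (sum_range_coeff_mul_mul_pow_le (coeff_pow_nonneg hf q) hf hz N).trans
      (mul_le_mul_of_nonneg_right ih (sum_nonneg fun i _ => mul_nonneg (hf i) (pow_nonneg hz i)))

section FussCatalanConvergence

variable {p : ℕ} {C : ℝ⟦X⟧}

lemma sum_range_coeff_mul_pow_le_of_eq_one_add_X_mul_pow (hC : C = 1 + X * C ^ (p + 1))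
    {z w : ℝ} (hz : 0 ≤ z) (hw₀ : 0 ≤ w) (hw : 1 + z * w ^ (p + 1) ≤ w) (N : ℕ) :
    ∑ i ∈ range N, coeff i C * z ^ i ≤ w := by
  have hC₀ := coeff_nonneg_of_eq_one_add_X_mul_pow hC
  induction N with
  | zero => simpa using hw₀
  | succ N ih =>
    have hpow := sum_range_coeff_pow_mul_pow_le hC₀ hz N (p + 1)
    calc ∑ i ∈ range (N + 1), coeff i C * z ^ i
        = 1 + z * ∑ i ∈ range N, coeff i (C ^ (p + 1)) * z ^ i := by
          rw [sum_range_succ', coeff_zero_eq_constantCoeff_apply,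
            constantCoeff_eq_one_of_eq_one_add_X_mul_pow hC, mul_sum, add_comm, pow_zero, mul_one]
          refine congrArg _ (sum_congr rfl fun i _ => ?_)
          rw [coeff_succ_of_eq_one_add_X_mul_pow hC]
          ring
      _ ≤ 1 + z * w ^ (p + 1) := by
          gcongr
          have hsum₀ : 0 ≤ ∑ i ∈ range N, coeff i C * z ^ i :=
            sum_nonneg fun i _ => mul_nonneg (hC₀ i) (pow_nonneg hz i)
          exact hpow.trans (pow_le_pow_left₀ hsum₀ ih _)
      _ ≤ w := hw

lemma summable_coeff_mul_pow_of_eq_one_add_X_mul_pow (hp : 1 ≤ p) (hC : C = 1 + X * C ^ (p + 1))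
    {z : ℝ} (hz : 0 ≤ z) (hzp : z ≤ (p : ℝ) ^ p / ((p : ℝ) + 1) ^ (p + 1)) :
    Summable fun n => coeff n C * z ^ n := by
  have hp' : (0 : ℝ) < p := by exact_mod_cast hp
  -- `w = (p + 1) / p` is the double root of `w = 1 + ρ w ^ (p + 1)`
  have hw : 1 + z * (((p : ℝ) + 1) / p) ^ (p + 1) ≤ ((p : ℝ) + 1) / p := by
    have hρ : (p : ℝ) ^ p / ((p : ℝ) + 1) ^ (p + 1) * (((p : ℝ) + 1) / p) ^ (p + 1) = 1 / p := by
      rw [div_pow]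
      field_simp
      ring
    calc 1 + z * (((p : ℝ) + 1) / p) ^ (p + 1)
        ≤ 1 + (p : ℝ) ^ p / ((p : ℝ) + 1) ^ (p + 1) * (((p : ℝ) + 1) / p) ^ (p + 1) := by gcongr
      _ = ((p : ℝ) + 1) / p := by rw [hρ]; field_simp
  exact summable_of_sum_range_le
    (fun n => mul_nonneg (coeff_nonneg_of_eq_one_add_X_mul_pow hC n) (pow_nonneg hz n))
    (sum_range_coeff_mul_pow_le_of_eq_one_add_X_mul_pow hC hz (by positivity) hw)

end FussCatalanConvergence

/-- Let `p = k - 1 ≥ 1` and let `b(x) = Σ b_n x^n` satisfy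
`b = exp(Σ_{i≥1} x^i b(x^i)^p / i)`.  Then each `b_n` is bounded above by the `n`-th
coefficient `c_n` of the Fuss–Catalan series `c = 1 + x c^(p+1)`; consequently the radius of
convergence `ξ_p` of `b` satisfies `ξ_p ≥ p^p / (p+1)^(p+1)`, i.e. `Σ b_n x^n` converges
whenever `|x| < p^p / (p+1)^(p+1)`. -/
theorem coeff_le_fuss_catalan (p : ℕ) (hp : 1 ≤ p) (B C : PowerSeries ℝ)
    (hB : B = expSR (seqBR (p + 1) B))
    (hC : C = 1 + PowerSeries.X * C ^ (p + 1)) :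
    (∀ n : ℕ, PowerSeries.coeff (R := ℝ) n B ≤ PowerSeries.coeff (R := ℝ) n C) ∧
    ∀ x : ℝ, |x| < (p : ℝ) ^ p / ((p : ℝ) + 1) ^ (p + 1) →
      Summable fun n : ℕ => PowerSeries.coeff (R := ℝ) n B * x ^ n := by
  have hmaj (n : ℕ) := majorizedBelow_of_eq_expSR_seqBR hB hC (n + 1) n n.lt_succ_self
  refine ⟨fun n => (hmaj n).2, fun x hx => ?_⟩
  have hsum := summable_coeff_mul_pow_of_eq_one_add_X_mul_pow hp hC (abs_nonneg x) hx.le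
  refine hsum.of_norm_bounded fun n => ?_
  rw [Real.norm_eq_abs, abs_mul, abs_pow, abs_of_nonneg (hmaj n).1]
  exact mul_le_mul_of_nonneg_right (hmaj n).2 (pow_nonneg (abs_nonneg x) n)

end KGonal2Trees
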